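/- arXiv:2006.11294 — 5 statements merged into one kernel-verified Lean document; each statement's English description precedes it below -/
import Mathlib

section
/- Let b > 0 and c1, c2 ≥ 0 be real numbers satisfying A = b^4*c1^4 - 6*b^4*c1^2*c2^2 + b^4*c2^4 + 8*b^2*c1^2 + 8*b^2*c2^2 - 48 = 0, B = b^4*c1^4 - 6*b^4*c1^2*c2^2 + b^4*c2^4 - 4*b^4*c1^2 + 8*b^4*c2^2 + 24*b^2*c1^2 - 24*b^2*c2^2 - 48 = 0, and C = b^4*c1^4 - 6*b^4*c1^2*c2^2 + b^4*c2^4 + 8*b^4*c1^2 - 4*b^4*c2^2 - 24*b^2*c1^2 + 24*b^2*c2^2 - 48 = 0, with (c1, c2) ≠ (0, 0). Then b = 2. -/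
theorem stmt_3 (b c1 c2 : ℝ) (hb : 0 < b) (hc1 : 0 ≤ c1) (hc2 : 0 ≤ c2)
    (hne : (c1, c2) ≠ (0, 0))
    (hA : b^4*c1^4 - 6*b^4*c1^2*c2^2 + b^4*c2^4 + 8*b^2*c1^2 + 8*b^2*c2^2 - 48 = 0)
    (hB : b^4*c1^4 - 6*b^4*c1^2*c2^2 + b^4*c2^4 - 4*b^4*c1^2 + 8*b^4*c2^2
      + 24*b^2*c1^2 - 24*b^2*c2^2 - 48 = 0)
    (hC : b^4*c1^4 - 6*b^4*c1^2*c2^2 + b^4*c2^4 + 8*b^4*c1^2 - 4*b^4*c2^2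
      - 24*b^2*c1^2 + 24*b^2*c2^2 - 48 = 0) :
    b = 2 := by
  have h1 : b^2 * (c1^2 - c2^2) * (4 - b^2) = 0 := by linear_combination (hB - hC) / 12
  have h2 : b^2 * (2*c1^2 - 3*c2^2) * (4 - b^2) = 0 := by
    linear_combination (4*hB - hC - 3*hA) / 12
  by_cases hb2 : 4 - b^2 = 0
  · nlinarith
  · have hbne : b^2 ≠ 0 := by positivity
    have e1 : c1^2 - c2^2 = 0 := by
      rcases mul_eq_zero.mp h1 with h | h
      · rcases mul_eq_zero.mp h with h | h
        · exact absurd h hbne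
        · exact h
      · exact absurd h hb2
    have e2 : 2*c1^2 - 3*c2^2 = 0 := by
      rcases mul_eq_zero.mp h2 with h | h
      · rcases mul_eq_zero.mp h with h | h
        · exact absurd h hbne
        · exact h
      · exact absurd h hb2
    have hc1z : c1 = 0 := by nlinarith
    have hc2z : c2 = 0 := by nlinarith
    exact absurd (by rw [hc1z, hc2z]) hne
end

section
/- Let b1, b2, c be positive real numbers satisfying c^4*(3*b1^4 - 2*b1^2*b2^2 - 9*b2^4) - c^2*(b1^2*b2^2 + 12*b1^2 + 36*b2^2) + 144 = 0, c^4*(b1^4 + 2*b1^2*b2^2 - 3*b2^4) - c^2*(b1^4 + 2*b1^2*b2^2) + 48 = 0, and c^2*(b1^2 - 3*b2^2) - b1^2 + 12 = 0. Then (b1^2, b2^2, c) = (12, 4, 1) or (b1^2, b2^2, c) = (8, 8, 1/2). -/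
theorem stmt_5 (b1 b2 c : ℝ) (hb1 : 0 < b1) (hb2 : 0 < b2) (hc : 0 < c)
    (h1 : c^4*(3*b1^4 - 2*b1^2*b2^2 - 9*b2^4) - c^2*(b1^2*b2^2 + 12*b1^2 + 36*b2^2) + 144 = 0)
    (h2 : c^4*(b1^4 + 2*b1^2*b2^2 - 3*b2^4) - c^2*(b1^4 + 2*b1^2*b2^2) + 48 = 0)
    (h3 : c^2*(b1^2 - 3*b2^2) - b1^2 + 12 = 0) :
    (b1^2 = 12 ∧ b2^2 = 4 ∧ c = 1) ∨ (b1^2 = 8 ∧ b2^2 = 8 ∧ c = 1/2) := by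
  by_cases hcase : b1^2 = 3*b2^2
  · -- round sphere case
    have hv : b2^2 = 4 := by nlinarith [h3, hcase]
    have hu : b1^2 = 12 := by rw [hcase, hv]; norm_num
    have hc2 : c^2 = 1 := by
      have e1 : 192*c^4 - 336*c^2 + 144 = 0 := by
        linear_combination h1 - (c^4*(3*b1^2+28) - 16*c^2)*(sub_eq_zero.mpr hu) - (c^4*(-2*b1^2-9*b2^2-36) - c^2*(b1^2+36))*(sub_eq_zero.mpr hv)
      have e2 : 192*c^4 - 240*c^2 + 48 = 0 := by
        linear_combination h2 - (c^4 - c^2)*(b1^2+20)*(sub_eq_zero.mpr hu) - (c^4*(2*b1^2-3*b2^2-12) - 2*b1^2*c^2)*(sub_eq_zero.mpr hv)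
      linarith
    have : (c - 1)*(c + 1) = 0 := by linear_combination hc2
    rcases mul_eq_zero.mp this with h | h
    · exact Or.inl ⟨hu, hv, by linarith⟩
    · linarith
  · -- b1^2 ≠ 3*b2^2
    have key : (3*b1^4) * ((b2^2 - 4)*(b1^2 + b2^2 - 16)) = 0 := by
      linear_combination (b1^2 - 3*b2^2)^2 * h2 -
        ((b1^6 - b1^4*b2^2 - 9*b1^2*b2^4 + 9*b2^6)*c^2 +
         (-12*b1^4 + 3*b1^4*b2^2 - 24*b1^2*b2^2 + 3*b1^2*b2^4 + 36*b2^4)) * h3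
    have hb14 : (0:ℝ) < 3*b1^4 := by positivity
    have key2 : (b2^2 - 4)*(b1^2 + b2^2 - 16) = 0 := by
      rcases mul_eq_zero.mp key with h | h
      · exact absurd h (ne_of_gt hb14)
      · exact h
    have kG : (3*c^2) * (b1^6 - 4*b1^4*b2^2 - 5*b1^2*b2^4 - 4*b1^4 + 32*b1^2*b2^2 + 36*b2^4) = 0 := by
      linear_combination (b1^2 - 3*b2^2)*h1 - 3*(b1^2 - 3*b2^2)*h2 + 8*c^2*b1^2*b2^2*h3
    have hG : b1^6 - 4*b1^4*b2^2 - 5*b1^2*b2^4 - 4*b1^4 + 32*b1^2*b2^2 + 36*b2^4 = 0 := by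
      rcases mul_eq_zero.mp kG with h | h
      · exact absurd h (by positivity)
      · exact h
    rcases mul_eq_zero.mp key2 with hv4 | hsum
    · -- b2^2 = 4 leads to contradiction
      exfalso
      have hv : b2^2 = 4 := by linarith
      have : (b1^2 - 12)^2 * (b1^2 + 4) = 0 := by
        linear_combination hG + (-4*b1^4 - 5*b1^2*b2^2 + 12*b1^2 + 36*b2^2 + 144 + (10*b1^2-72)*b2^2 + 8*b1^4 - 24*b1^2 - 288)*(sub_eq_zero.mpr hv)
      rcases mul_eq_zero.mp this with h | h
      · have h12 : b1^2 = 12 := by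
          have := sq_eq_zero_iff.mp h
          linarith
        exact hcase (by rw [h12, hv]; norm_num)
      · nlinarith [sq_nonneg b1]
    · -- b1^2 + b2^2 = 16
      have hsum' : b1^2 + b2^2 = 16 := by linarith
      have hfac : (96:ℝ) * ((b2^2 - 4)*(b2^2 - 8)) = 0 := by
        linear_combination hG - (b1^4 - 5*b1^2*b2^2 + 12*b1^2 - 60*b2^2 + 192)*(sub_eq_zero.mpr hsum')
      have hfac2 : (b2^2 - 4)*(b2^2 - 8) = 0 := by
        rcases mul_eq_zero.mp hfac with h | h
        · norm_num at h
        · exact h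
      rcases mul_eq_zero.mp hfac2 with h | h
      · -- b2^2 = 4 → b1^2 = 12 = 3*b2^2, contradiction
        exfalso
        have hv : b2^2 = 4 := by linarith
        have hu : b1^2 = 12 := by linarith
        exact hcase (by rw [hu, hv]; norm_num)
      · have hv : b2^2 = 8 := by linarith
        have hu : b1^2 = 8 := by linarith
        have hc2 : c^2 = 1/4 := by
          have h3' := h3
          rw [hu, hv] at h3'
          nlinarith [h3']
        have : (2*c - 1)*(2*c + 1) = 0 := by linear_combination 4*hc2
        rcases mul_eq_zero.mp this with h | h
        · exact Or.inr ⟨hu, hv, by linarith⟩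
        · linarith
end

section
/- There are no real numbers b > 0 and c1, c2 ≥ 0 with c1 ≠ c2 satisfying the three equations b^4*c1^4 - 6*b^4*c1^2*c2^2 + b^4*c2^4 - 8*b^2*c1^2 - 8*b^2*c2^2 - 48 = 0, b^4*c1^4 - 6*b^4*c1^2*c2^2 + b^4*c2^4 - 4*b^4*c1^2 + 8*b^4*c2^2 - 24*b^2*c1^2 + 24*b^2*c2^2 - 48 = 0, and b^4*c1^4 - 6*b^4*c1^2*c2^2 + b^4*c2^4 + 8*b^4*c1^2 - 4*b^4*c2^2 + 24*b^2*c1^2 - 24*b^2*c2^2 - 48 = 0. -/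
theorem stmt_8 :
    ¬ ∃ b c1 c2 : ℝ, 0 < b ∧ 0 ≤ c1 ∧ 0 ≤ c2 ∧ c1 ≠ c2 ∧
      b^4*c1^4 - 6*b^4*c1^2*c2^2 + b^4*c2^4 - 8*b^2*c1^2 - 8*b^2*c2^2 - 48 = 0 ∧
      b^4*c1^4 - 6*b^4*c1^2*c2^2 + b^4*c2^4 - 4*b^4*c1^2 + 8*b^4*c2^2
        - 24*b^2*c1^2 + 24*b^2*c2^2 - 48 = 0 ∧
      b^4*c1^4 - 6*b^4*c1^2*c2^2 + b^4*c2^4 + 8*b^4*c1^2 - 4*b^4*c2^2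
        + 24*b^2*c1^2 - 24*b^2*c2^2 - 48 = 0 := by
  rintro ⟨b, c1, c2, hb, hc1, hc2, hne, e1, e2, e3⟩
  have hb2 : 0 < b^2 := by positivity
  -- e2 - e1 : b^2*(b^2+4)*(2*c2^2 - c1^2)*4 = 0
  have d1 : b^2*(b^2+4)*(2*c2^2 - c1^2) = 0 := by nlinarith [sq_nonneg b]
  have d2 : b^2*(b^2+4)*(2*c1^2 - c2^2) = 0 := by nlinarith [sq_nonneg b]
  have hpos : 0 < b^2*(b^2+4) := by positivity
  have h1 : 2*c2^2 - c1^2 = 0 := by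
    rcases mul_eq_zero.mp d1 with h | h
    · exact absurd h (ne_of_gt hpos)
    · exact h
  have h2 : 2*c1^2 - c2^2 = 0 := by
    rcases mul_eq_zero.mp d2 with h | h
    · exact absurd h (ne_of_gt hpos)
    · exact h
  have hc1z : c1 = 0 := by nlinarith [sq_nonneg c1, sq_nonneg c2]
  have hc2z : c2 = 0 := by nlinarith [sq_nonneg c1, sq_nonneg c2]
  exact hne (hc1z.trans hc2z.symm)
end

section
/- Let b1, b2, c be positive real numbers satisfying c^4*(3*b1^4 + 2*b1^2*b2^2 - 9*b2^4) + c^2*(b1^2*b2^2 + 12*b1^2 - 36*b2^2) + 144 = 0, c^2*(b1^2 + 3*b2^2) - b1^2 - 12 = 0, and c^4*(8*b1^2*b2^2 - 12*b2^4) + c^2*(b1^2*b2^2 - 48*b1^2 + 48*b2^2) + 12*b1^2 = 0. Then (b1, b2, c) = (2, 2, 1). -/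
theorem stmt_9 (b1 b2 c : ℝ) (hb1 : 0 < b1) (hb2 : 0 < b2) (hc : 0 < c)
    (h1 : c^4*(3*b1^4 + 2*b1^2*b2^2 - 9*b2^4) + c^2*(b1^2*b2^2 + 12*b1^2 - 36*b2^2) + 144 = 0)
    (h2 : c^2*(b1^2 + 3*b2^2) - b1^2 - 12 = 0)
    (h3 : c^4*(8*b1^2*b2^2 - 12*b2^4) + c^2*(b1^2*b2^2 - 48*b1^2 + 48*b2^2) + 12*b1^2 = 0) :
    b1 = 2 ∧ b2 = 2 ∧ c = 1 := by
  have hE1 : 3*b1^8 + 3*b1^6*b2^2 + 84*b1^6 - 6*b1^4*b2^4 + 60*b1^4*b2^2 + 720*b1^4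
      - 288*b1^2*b2^4 + 1152*b1^2*b2^2 - 1296*b2^4 = 0 := by
    linear_combination (b1^2+3*b2^2)^2 * h1
      - ((3*b1^4+2*b1^2*b2^2-9*b2^4)*(c^2*(b1^2+3*b2^2)+b1^2+12)
        + (b1^2*b2^2+12*b1^2-36*b2^2)*(b1^2+3*b2^2)) * h2
  have hE3 : 9*b1^4*(b2^2-4)*(b1^2-b2^2+16) = 0 := by
    linear_combination (b1^2+3*b2^2)^2 * h3
      - ((8*b1^2*b2^2-12*b2^4)*(c^2*(b1^2+3*b2^2)+b1^2+12)
        + (b1^2*b2^2-48*b1^2+48*b2^2)*(b1^2+3*b2^2)) * h2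
  have hb1sq : 0 < b1^2 := by positivity
  have hcase : (b2^2-4) * (b1^2-b2^2+16) = 0 := by
    have h9 : (9:ℝ)*b1^4 ≠ 0 := by positivity
    have := mul_eq_zero.mp (by linear_combination hE3 : (9*b1^4) * ((b2^2-4)*(b1^2-b2^2+16)) = 0)
    tauto
  rcases mul_eq_zero.mp hcase with hy | hx
  · -- b2^2 = 4
    have hb2v : b2 = 2 := by nlinarith [sq_nonneg (b2-2), sq_nonneg (b2+2)]
    subst hb2v
    have hx4 : b1^2 = 4 := by
      have' hfac : 3*(b1^2-4)*(b1^6+36*b1^4+432*b1^2+1728) = 0 := by linear_combination hE1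
      have hpos : (0:ℝ) < b1^6+36*b1^4+432*b1^2+1728 := by positivity
      nlinarith [hfac, hpos]
    have hb1v : b1 = 2 := by nlinarith [sq_nonneg (b1-2), sq_nonneg (b1+2)]
    subst hb1v
    have hcv : c^2 = 1 := by linarith [h2]
    have : c = 1 := by nlinarith [sq_nonneg (c-1), sq_nonneg (c+1)]
    exact ⟨rfl, rfl, this⟩
  · -- b2^2 = b1^2 + 16 : contradiction with hE1
    exfalso
    have hy : b2^2 = b1^2 + 16 := by linarith
    nlinarith [hE1, hy, sq_nonneg b1, pow_pos hb1 2, pow_pos hb1 4, pow_pos hb1 6, pow_pos hb1 8]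
end

section
/- Let d1, d2, d3 be pairwise and jointly constrained positive reals with d1 = d2 + d3, and let a1, a2, a3, b1 be positive reals and k a real constant. Then the function F(t) = -(a1^2*(d2+d3) + k*a1*a2*a3)*e^{2t(d2+d3)} + 3*b1^2*(d2+d3)*e^{-2t(d2+d3)} + a2^2*(d2-d3)*e^{2*d2*t} - a3^2*(d2-d3)*e^{2*d3*t} + 2*(d2+d3)*a1*b1 - k*a2*a3*b1 is not identically zero on ℝ. -/
open Filter Real

theorem stmt_16 (d1 d2 d3 a1 a2 a3 b1 : ℝ) (k : ℝ)
    (hd1 : 0 < d1) (hd2 : 0 < d2) (hd3 : 0 < d3) (hsum : d1 = d2 + d3)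
    (ha1 : 0 < a1) (ha2 : 0 < a2) (ha3 : 0 < a3) (hb1 : 0 < b1) :
    ¬ ∀ t : ℝ,
      -(a1^2*(d2 + d3) + k*a1*a2*a3) * Real.exp (2*t*(d2 + d3))
        + 3*b1^2*(d2 + d3) * Real.exp (-(2*t*(d2 + d3)))
        + a2^2*(d2 - d3) * Real.exp (2*d2*t)
        - a3^2*(d2 - d3) * Real.exp (2*d3*t)
        + 2*(d2 + d3)*a1*b1 - k*a2*a3*b1 = 0 := by
  intro h
  have hc : 0 < d2 + d3 := by linarith
  -- exp(2tc) → 0 as t → -∞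
  have h0 : ∀ c : ℝ, 0 < c → Tendsto (fun t : ℝ => Real.exp (c * t)) atBot (nhds 0) := by
    intro c hcpos
    apply Real.tendsto_exp_atBot.comp
    exact (tendsto_const_mul_atBot_of_pos hcpos).mpr tendsto_id
  have hbig : Tendsto (fun t : ℝ => 3*b1^2*(d2+d3) * Real.exp (-(2*t*(d2 + d3)))) atBot atTop := by
    apply Tendsto.const_mul_atTop (by positivity)
    apply Real.tendsto_exp_atTop.comp
    have : Tendsto (fun t : ℝ => (-(2*(d2+d3))) * t) atBot atTop :=
      (tendsto_const_mul_atTop_iff_neg tendsto_id).mpr (by linarith)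
    exact this.congr (fun t => by ring)
  have hF : Tendsto (fun t : ℝ =>
      -(a1^2*(d2 + d3) + k*a1*a2*a3) * Real.exp (2*t*(d2 + d3))
        + 3*b1^2*(d2 + d3) * Real.exp (-(2*t*(d2 + d3)))
        + a2^2*(d2 - d3) * Real.exp (2*d2*t)
        - a3^2*(d2 - d3) * Real.exp (2*d3*t)
        + 2*(d2 + d3)*a1*b1 - k*a2*a3*b1) atBot atTop := by
    have t1 : Tendsto (fun t : ℝ => -(a1^2*(d2 + d3) + k*a1*a2*a3) * Real.exp (2*t*(d2 + d3)))
        atBot (nhds 0) := by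
      have := ((h0 (2*(d2+d3)) (by linarith)).const_mul (-(a1^2*(d2 + d3) + k*a1*a2*a3)))
      simpa [mul_comm, mul_assoc, mul_left_comm] using this.congr (fun t => by ring_nf)
    have t2 : Tendsto (fun t : ℝ => a2^2*(d2 - d3) * Real.exp (2*d2*t)) atBot (nhds 0) := by
      have := ((h0 (2*d2) (by linarith)).const_mul (a2^2*(d2 - d3)))
      simpa using this
    have t3 : Tendsto (fun t : ℝ => a3^2*(d2 - d3) * Real.exp (2*d3*t)) atBot (nhds 0) := by
      have := ((h0 (2*d3) (by linarith)).const_mul (a3^2*(d2 - d3)))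
      simpa using this
    have s1 := t1.add_atTop hbig
    have s2 := s1.atTop_add t2
    have s3 := s2.atTop_add t3.neg
    have s4 := tendsto_atTop_add_const_right atBot (2*(d2 + d3)*a1*b1) s3
    have s5 := tendsto_atTop_add_const_right atBot (-(k*a2*a3*b1)) s4
    exact s5.congr (fun t => by ring)
  have h0' : Tendsto (fun _ : ℝ => (0:ℝ)) atBot atTop := (tendsto_congr h).mp hF
  obtain ⟨t, ht⟩ := (h0'.eventually (eventually_ge_atTop (1:ℝ))).exists
  linarith
end
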